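/- Let n ≥ 1, d ∈ ℝ, ρ > 0 with ρ ≥ n|d| + |d(d-2)|·max((ε⁻¹-1)⁻¹, (1-θ)⁻¹) for given ε, θ ∈ (0,1). Then the function Λ(x) = (ρ + |x|²)^{d/2} on ℝⁿ satisfies θ Λ(x) ≤ Λ(x) - ΔΛ(x) ≤ ε⁻¹ Λ(x) for all x ∈ ℝⁿ. -/

import Mathlib

noncomputable def lap {n : ℕ} (f : EuclideanSpace ℝ (Fin n) → ℝ)
    (x : EuclideanSpace ℝ (Fin n)) : ℝ :=
  ∑ i : Fin n, fderiv ℝ (fun y => fderiv ℝ f y (EuclideanSpace.single i 1)) x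
    (EuclideanSpace.single i 1)

/-!
Since `ΔΛ = (n d S⁻¹ + d (d - 2) r² S⁻²) Λ` with `S = ρ + r² ≥ ρ` and `r² ≤ S`, the factor
`ΔΛ / Λ` is bounded in absolute value by `(n |d| + |d (d - 2)|) / ρ`, and the assumption on `ρ`
makes this at most both `1 - θ` and `ε⁻¹ - 1`.
-/

open Real InnerProductSpace

section InnerProductSpace

variable {E : Type*} [NormedAddCommGroup E] [InnerProductSpace ℝ E] {ρ : ℝ}

theorem hasFDerivAt_rpow_const_add_norm_sq (hρ : 0 < ρ) (p : ℝ) (x : E) :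
    HasFDerivAt (fun y : E => (ρ + ‖y‖ ^ 2) ^ p)
      ((2 * p * (ρ + ‖x‖ ^ 2) ^ (p - 1)) • innerSL ℝ x) x := by
  have hsq : HasFDerivAt (fun y : E => ρ + ‖y‖ ^ 2) (2 • innerSL ℝ x) x := by
    simpa using ((hasFDerivAt_id x).norm_sq).const_add ρ
  convert hsq.rpow_const (p := p) (Or.inl (by positivity)) using 1
  ext v
  simp only [smul_apply, nsmul_eq_mul, smul_eq_mul]
  ring

theorem fderiv_rpow_const_add_norm_sq_apply (hρ : 0 < ρ) (p : ℝ) (y v : E) :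
    fderiv ℝ (fun z : E => (ρ + ‖z‖ ^ 2) ^ p) y v =
      2 * p * (ρ + ‖y‖ ^ 2) ^ (p - 1) * ⟪y, v⟫_ℝ := by
  simp [(hasFDerivAt_rpow_const_add_norm_sq hρ p y).fderiv]

theorem fderiv_fderiv_rpow_const_add_norm_sq_apply (hρ : 0 < ρ) (p : ℝ) (x v : E) :
    fderiv ℝ (fun y : E => fderiv ℝ (fun z : E => (ρ + ‖z‖ ^ 2) ^ p) y v) x v =
      4 * p * (p - 1) * (ρ + ‖x‖ ^ 2) ^ (p - 2) * ⟪x, v⟫_ℝ ^ 2 +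
        2 * p * (ρ + ‖x‖ ^ 2) ^ (p - 1) * ‖v‖ ^ 2 := by
  simp_rw [fderiv_rpow_const_add_norm_sq_apply hρ]
  have hinner : HasFDerivAt (fun y : E => ⟪y, v⟫_ℝ) (innerSL ℝ v) x := by
    simpa [real_inner_comm] using (innerSL ℝ v).hasFDerivAt (x := x)
  have h : HasFDerivAt (fun y : E => 2 * p * (ρ + ‖y‖ ^ 2) ^ (p - 1) * ⟪y, v⟫_ℝ) _ x :=
    ((hasFDerivAt_rpow_const_add_norm_sq hρ (p - 1) x).const_mul (2 * p)).mul hinner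
  rw [h.fderiv]
  simp [show p - 1 - 1 = p - 2 by ring]
  ring

end InnerProductSpace

theorem lap_rpow_const_add_norm_sq {n : ℕ} {ρ : ℝ} (hρ : 0 < ρ) (p : ℝ)
    (x : EuclideanSpace ℝ (Fin n)) :
    lap (fun y => (ρ + ‖y‖ ^ 2) ^ p) x =
      4 * p * (p - 1) * (ρ + ‖x‖ ^ 2) ^ (p - 2) * ‖x‖ ^ 2 +
        2 * p * n * (ρ + ‖x‖ ^ 2) ^ (p - 1) := by
  unfold lap
  simp only [fderiv_fderiv_rpow_const_add_norm_sq_apply hρ]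
  simp [EuclideanSpace.inner_single_right, Finset.sum_add_distrib, ← Finset.mul_sum,
    EuclideanSpace.real_norm_sq_eq]
  ring

theorem lap_rpow_half_eq_mul {n : ℕ} {ρ : ℝ} (hρ : 0 < ρ) (d : ℝ)
    (x : EuclideanSpace ℝ (Fin n)) :
    lap (fun y => (ρ + ‖y‖ ^ 2) ^ (d / 2)) x =
      (n * d * (ρ + ‖x‖ ^ 2)⁻¹ + d * (d - 2) * ‖x‖ ^ 2 * (ρ + ‖x‖ ^ 2)⁻¹ ^ 2) *
        (ρ + ‖x‖ ^ 2) ^ (d / 2) := by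
  have hS : 0 < ρ + ‖x‖ ^ 2 := by positivity
  rw [lap_rpow_const_add_norm_sq hρ, rpow_sub hS, rpow_sub hS, rpow_one, rpow_two]
  field_simp
  ring

theorem abs_mul_inv_add_mul_inv_sq_le {a b ρ S r : ℝ} (hρ : 0 < ρ) (hρS : ρ ≤ S) (hr : 0 ≤ r)
    (hrS : r ≤ S) : |a * S⁻¹ + b * r * S⁻¹ ^ 2| ≤ (|a| + |b|) / ρ := by
  have hS : 0 < S := hρ.trans_le hρS
  have hrS' : r * S⁻¹ ≤ 1 := by rw [← div_eq_mul_inv]; exact div_le_one_of_le₀ hrS hS.le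
  calc |a * S⁻¹ + b * r * S⁻¹ ^ 2| ≤ |a| * S⁻¹ + |b| * (r * S⁻¹) * S⁻¹ := by
        refine (abs_add_le _ _).trans_eq ?_
        simp only [abs_mul, abs_pow, abs_inv, abs_of_pos hS, abs_of_nonneg hr]
        ring
    _ ≤ |a| * S⁻¹ + |b| * 1 * S⁻¹ := by gcongr
    _ = (|a| + |b|) * S⁻¹ := by ring
    _ ≤ (|a| + |b|) / ρ := by rw [div_eq_mul_inv]; gcongr

theorem stmt5_general (n : ℕ) (d ρ ε θ : ℝ)
    (hε0 : 0 < ε) (hε1 : ε < 1) (hθ1 : θ < 1) (hρ0 : 0 < ρ)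
    (hρ : (n * |d| + |d * (d - 2)|) * max ((ε⁻¹ - 1)⁻¹) ((1 - θ)⁻¹) ≤ ρ) :
    ∀ x : EuclideanSpace ℝ (Fin n),
      θ * (ρ + ‖x‖ ^ (2:ℕ)) ^ (d/2) ≤
        (ρ + ‖x‖ ^ (2:ℕ)) ^ (d/2) - lap (fun y => (ρ + ‖y‖ ^ (2:ℕ)) ^ (d/2)) x ∧
      (ρ + ‖x‖ ^ (2:ℕ)) ^ (d/2) - lap (fun y => (ρ + ‖y‖ ^ (2:ℕ)) ^ (d/2)) x ≤
        ε⁻¹ * (ρ + ‖x‖ ^ (2:ℕ)) ^ (d/2) := by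
  intro x
  set M := (n : ℝ) * |d| + |d * (d - 2)|
  have hM : 0 ≤ M := by positivity
  have hθ : M / ρ ≤ 1 - θ := (div_le_comm₀ hρ0 (by linarith)).2 <| by
    rw [div_eq_mul_inv]; exact (mul_le_mul_of_nonneg_left (le_max_right _ _) hM).trans hρ
  have hε : M / ρ ≤ ε⁻¹ - 1 := (div_le_comm₀ hρ0 (by linarith [one_lt_inv₀ hε0 |>.2 hε1])).2 <| by
    rw [div_eq_mul_inv]; exact (mul_le_mul_of_nonneg_left (le_max_left _ _) hM).trans hρ
  have hratio := abs_le.1 <| (abs_mul_inv_add_mul_inv_sq_le (a := n * d) (b := d * (d - 2)) hρ0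
    (le_add_of_nonneg_right (sq_nonneg ‖x‖)) (sq_nonneg ‖x‖)
    (le_add_of_nonneg_left hρ0.le)).trans_eq (by rw [abs_mul, Nat.abs_cast])
  rw [lap_rpow_half_eq_mul hρ0, ← one_sub_mul]
  constructor <;> gcongr <;> linarith

theorem stmt5 (n : ℕ) (hn : 1 ≤ n) (d ρ ε θ : ℝ)
    (hε0 : 0 < ε) (hε1 : ε < 1) (hθ0 : 0 < θ) (hθ1 : θ < 1) (hρ0 : 0 < ρ)
    (hρ : (n * |d| + |d * (d - 2)|) * max ((ε⁻¹ - 1)⁻¹) ((1 - θ)⁻¹) ≤ ρ) :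
    ∀ x : EuclideanSpace ℝ (Fin n),
      θ * (ρ + ‖x‖ ^ (2:ℕ)) ^ (d/2) ≤
        (ρ + ‖x‖ ^ (2:ℕ)) ^ (d/2) - lap (fun y => (ρ + ‖y‖ ^ (2:ℕ)) ^ (d/2)) x ∧
      (ρ + ‖x‖ ^ (2:ℕ)) ^ (d/2) - lap (fun y => (ρ + ‖y‖ ^ (2:ℕ)) ^ (d/2)) x ≤
        ε⁻¹ * (ρ + ‖x‖ ^ (2:ℕ)) ^ (d/2) :=
  stmt5_general n d ρ ε θ hε0 hε1 hθ1 hρ0 hρ
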